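/- arXiv:2503.21479 — 3 statements merged into one kernel-verified Lean document; each statement's English description precedes it below -/
import Mathlib

section
/- The umlaut information is finite, U(A;B)_ρ < ∞, if and only if there exists a pure state ψ_B = |ψ⟩⟨ψ|_B on H_B such that supp(ρ_A ⊗ ψ_B) ⊆ supp(ρ_{AB}). -/
/-!
The infimum defining `U(A;B)_ρ` is finite exactly when some density operator `σ_B` satisfies
`supp(ρ_A ⊗ σ_B) ⊆ supp ρ_{AB}`. A pure state is such a `σ_B`; conversely, for an eigenvector `ψ`
of `σ_B` with nonzero eigenvalue `μ` one has `|ψ⟩⟨ψ| = μ⁻¹ |ψ⟩⟨ψ| σ_B`, so the kernel of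
`ρ_A ⊗ σ_B` lies in that of `ρ_A ⊗ |ψ⟩⟨ψ|`.
-/

open scoped Kronecker ComplexOrder Classical
open Matrix

noncomputable section

variable {n a b : Type*} [Fintype n] [DecidableEq n]
  [Fintype a] [DecidableEq a] [Fintype b] [DecidableEq b]

/-- Matrix logarithm via continuous functional calculus. -/
def mlog (A : Matrix n n ℂ) : Matrix n n ℂ := cfc Real.log A

/-- Matrix exponential via continuous functional calculus. -/
def mexp (A : Matrix n n ℂ) : Matrix n n ℂ := cfc Real.exp A

/-- Matrix real power via continuous functional calculus. -/
def mpow (A : Matrix n n ℂ) (α : ℝ) : Matrix n n ℂ := cfc (fun x : ℝ => x ^ α) A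

/-- A density operator: positive semidefinite with unit trace. -/
def IsDensity (ρ : Matrix n n ℂ) : Prop := ρ.PosSemidef ∧ ρ.trace = 1

/-- `supp ρ ⊆ supp σ`, expressed as `ker σ ⊆ ker ρ`. -/
def suppLE (ρ σ : Matrix n n ℂ) : Prop := ∀ v : n → ℂ, σ.mulVec v = 0 → ρ.mulVec v = 0

/-- Umegaki relative entropy, `+∞` on support violation. -/
def relEntropy (ρ σ : Matrix n n ℂ) : EReal :=
  if suppLE ρ σ then (((ρ * (mlog ρ - mlog σ)).trace.re : ℝ) : EReal) else ⊤

/-- Partial trace over the second (B) factor. -/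
def ptraceB (ρ : Matrix (a × b) (a × b) ℂ) : Matrix a a ℂ :=
  Matrix.of fun i j => ∑ k : b, ρ (i, k) (j, k)

/-- Partial trace over the first (A) factor. -/
def ptraceA (ρ : Matrix (a × b) (a × b) ℂ) : Matrix b b ℂ :=
  Matrix.of fun k l => ∑ i : a, ρ (i, k) (i, l)

/-- Quantum umlaut information `U(A;B)_ρ = min_{σ_B} D(ρ_A ⊗ σ_B ‖ ρ_{AB})`. -/
def umlaut (ρ : Matrix (a × b) (a × b) ℂ) : EReal :=
  ⨅ σ : {σ : Matrix b b ℂ // IsDensity σ}, relEntropy (ptraceB ρ ⊗ₖ σ.1) ρ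

section

variable {m : Type*} [Fintype m]

theorem suppLE.trans {ρ σ τ : Matrix m m ℂ} (hρσ : suppLE ρ σ) (hστ : suppLE σ τ) :
    suppLE ρ τ :=
  fun v hv => hρσ v (hστ v hv)

theorem suppLE_mul_left (M σ : Matrix m m ℂ) : suppLE (M * σ) σ := by
  intro v hv
  rw [← mulVec_mulVec, hv, mulVec_zero]

theorem IsDensity.ne_zero {σ : Matrix m m ℂ} (hσ : IsDensity σ) : σ ≠ 0 := by
  rintro rfl
  simpa using hσ.2

theorem isDensity_vecMulVec_self_star {ψ : m → ℂ} (hψ : ∑ i, ‖ψ i‖ ^ 2 = 1) :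
    IsDensity (vecMulVec ψ (star ψ)) := by
  refine ⟨posSemidef_vecMulVec_self_star ψ, ?_⟩
  simp [trace_vecMulVec, dotProduct, Complex.mul_conj', ← Complex.ofReal_pow,
    ← Complex.ofReal_sum, hψ]

theorem vecMulVec_self_star_mul_of_mulVec_eq_smul {σ : Matrix m m ℂ} (hσ : σ.IsHermitian)
    {ψ : m → ℂ} {μ : ℝ} (hψ : σ *ᵥ ψ = μ • ψ) :
    vecMulVec ψ (star ψ) * σ = μ • vecMulVec ψ (star ψ) := by
  rw [vecMulVec_mul, ← hσ.eq, vecMul_conjTranspose, star_star, hψ, star_smul, star_trivial]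
  ext i j
  simp [vecMulVec_apply, mul_left_comm]

end

theorem relEntropy_lt_top_iff {ρ σ : Matrix n n ℂ} : relEntropy ρ σ < ⊤ ↔ suppLE ρ σ := by
  unfold relEntropy
  split_ifs with h <;> simp [h, EReal.coe_lt_top]

theorem Matrix.IsHermitian.exists_unit_eigenvector_of_ne_zero {σ : Matrix n n ℂ}
    (hσ : σ.IsHermitian) (h : σ ≠ 0) :
    ∃ ψ : n → ℂ, ∑ i, ‖ψ i‖ ^ 2 = 1 ∧ ∃ μ : ℝ, μ ≠ 0 ∧ σ *ᵥ ψ = μ • ψ := by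
  obtain ⟨i, hi⟩ := Function.ne_iff.mp (mt hσ.eigenvalues_eq_zero_iff.mp h)
  refine ⟨hσ.eigenvectorBasis i, ?_, hσ.eigenvalues i, hi, hσ.mulVec_eigenvectorBasis i⟩
  have hunit : ‖hσ.eigenvectorBasis i‖ = 1 := hσ.eigenvectorBasis.orthonormal.1 i
  rwa [EuclideanSpace.norm_eq, Real.sqrt_eq_one] at hunit

theorem suppLE_kronecker_vecMulVec_self_star {σ : Matrix b b ℂ} (hσ : σ.IsHermitian)
    {ψ : b → ℂ} {μ : ℝ} (hμ : μ ≠ 0) (hψ : σ *ᵥ ψ = μ • ψ) (X : Matrix a a ℂ) :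
    suppLE (X ⊗ₖ vecMulVec ψ (star ψ)) (X ⊗ₖ σ) := by
  have hproj : vecMulVec ψ (star ψ) = (μ⁻¹ • vecMulVec ψ (star ψ)) * σ := by
    rw [smul_mul_assoc, vecMulVec_self_star_mul_of_mulVec_eq_smul hσ hψ, smul_smul,
      inv_mul_cancel₀ hμ, one_smul]
  rw [hproj, ← one_mul X, mul_kronecker_mul, one_mul]
  exact suppLE_mul_left _ _

theorem umlaut_lt_top_iff {ρ : Matrix (a × b) (a × b) ℂ} :
    umlaut ρ < ⊤ ↔ ∃ σ : Matrix b b ℂ, IsDensity σ ∧ suppLE (ptraceB ρ ⊗ₖ σ) ρ := by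
  simp [umlaut, iInf_lt_iff, relEntropy_lt_top_iff]

theorem umlaut_finite_iff_general (ρ : Matrix (a × b) (a × b) ℂ) :
    umlaut ρ < ⊤ ↔
      ∃ ψ : b → ℂ, (∑ i, ‖ψ i‖ ^ 2 = 1) ∧
        suppLE (ptraceB ρ ⊗ₖ Matrix.vecMulVec ψ (star ψ)) ρ := by
  rw [umlaut_lt_top_iff]
  constructor
  · rintro ⟨σ, hσ, hsupp⟩
    obtain ⟨ψ, hψ, μ, hμ, heig⟩ := hσ.1.isHermitian.exists_unit_eigenvector_of_ne_zero hσ.ne_zero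
    exact ⟨ψ, hψ, (suppLE_kronecker_vecMulVec_self_star hσ.1.isHermitian hμ heig _).trans hsupp⟩
  · rintro ⟨ψ, hψ, hsupp⟩
    exact ⟨_, isDensity_vecMulVec_self_star hψ, hsupp⟩

/-- `U(A;B)_ρ < ∞` iff there is a pure state `|ψ⟩⟨ψ|_B` with
`supp(ρ_A ⊗ |ψ⟩⟨ψ|) ⊆ supp(ρ_{AB})`. -/
theorem umlaut_finite_iff (ρ : Matrix (a × b) (a × b) ℂ) (hρ : IsDensity ρ) :
    umlaut ρ < ⊤ ↔
      ∃ ψ : b → ℂ, (∑ i, ‖ψ i‖ ^ 2 = 1) ∧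
        suppLE (ptraceB ρ ⊗ₖ Matrix.vecMulVec ψ (star ψ)) ρ :=
  umlaut_finite_iff_general ρ

end
end

section
/- Closed form for the quantum umlaut information: for a bipartite state ρ_{AB} with full support, U(A;B)_ρ = −S(ρ_A) − log Tr[exp(Tr_A[(ρ_A ⊗ 1_B) log ρ_{AB}])]. Moreover, the unique minimizer of σ_B ↦ D(ρ_A ⊗ σ_B ‖ ρ_{AB}) is the umlaut-marginal ρ̈_B := exp(X_B)/Tr[exp(X_B)], where X_B = Tr_A[(ρ_A ⊗ 1_B) log ρ_{AB}]. -/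
/-!
Put `X = Tr_A[(ρ_A ⊗ 1) log ρ_AB]` and `γ = exp X / Tr exp X`. Diagonalising both factors,
`Tr[(ρ_A ⊗ σ) log(ρ_A ⊗ σ)] = Tr[ρ_A log ρ_A] + Tr[σ log σ]`, while
`Tr[(ρ_A ⊗ σ) log ρ_AB] = Tr[σ X]`; since `log γ = X - log Tr exp X`, this gives
`D(ρ_A ⊗ σ ‖ ρ_AB) = Tr[ρ_A log ρ_A] - log Tr exp X + D(σ ‖ γ)`.
Klein's inequality `D(σ ‖ γ) ≥ 0`, with equality only at `σ = γ`, then yields both the value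
and the unique minimiser. Klein's inequality itself follows by writing `σ = V diag(q) V⋆`,
`γ = W diag(r) W⋆`: `D(σ ‖ γ) - Tr(σ - γ) = ∑ |(V⋆W) j m|² r m klFun (q j / r m)`
with `klFun x = x log x + 1 - x ≥ 0`, vanishing only at `x = 1`.
-/

open scoped Kronecker ComplexOrder Classical
open Matrix

noncomputable section

variable {n a b : Type*} [Fintype n] [DecidableEq n]
  [Fintype a] [DecidableEq a] [Fintype b] [DecidableEq b]

/-- The operator `X_B = Tr_A[(ρ_A ⊗ 1_B) log ρ_{AB}]`. -/
def Xop (ρ : Matrix (a × b) (a × b) ℂ) : Matrix b b ℂ :=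
  ptraceA ((ptraceB ρ ⊗ₖ (1 : Matrix b b ℂ)) * mlog ρ)

/-- The umlaut-marginal `ρ̈_B = exp(X_B)/Tr[exp(X_B)]`. -/
def umlautMarginal (ρ : Matrix (a × b) (a × b) ℂ) : Matrix b b ℂ :=
  (((mexp (Xop ρ)).trace.re)⁻¹ : ℝ) • mexp (Xop ρ)

open Unitary InformationTheory

def unitaryDiag (U : unitaryGroup n ℂ) (d : n → ℝ) : Matrix n n ℂ :=
  conjStarAlgAut ℂ _ U (diagonal (RCLike.ofReal ∘ d))

lemma Matrix.IsHermitian.eq_unitaryDiag {A : Matrix n n ℂ} (hA : A.IsHermitian) :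
    A = unitaryDiag hA.eigenvectorUnitary hA.eigenvalues :=
  hA.spectral_theorem

lemma isSelfAdjoint_unitaryDiag (U : unitaryGroup n ℂ) (d : n → ℝ) :
    IsSelfAdjoint (unitaryDiag U d) := by
  refine IsSelfAdjoint.map ?_ _
  simp [IsSelfAdjoint, star_eq_conjTranspose, diagonal_conjTranspose]

lemma unitaryDiag_one (U : unitaryGroup n ℂ) : unitaryDiag U 1 = 1 := by
  simp [unitaryDiag]

lemma unitaryDiag_mul_unitaryDiag (U : unitaryGroup n ℂ) (d e : n → ℝ) :
    unitaryDiag U d * unitaryDiag U e = unitaryDiag U (d * e) := by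
  simp only [unitaryDiag, ← map_mul, diagonal_mul_diagonal]
  congr 2
  ext i
  simp

lemma smul_unitaryDiag (c : ℝ) (U : unitaryGroup n ℂ) (d : n → ℝ) :
    c • unitaryDiag U d = unitaryDiag U (c • d) := by
  have hd : RCLike.ofReal ∘ (c • d) = (c : ℂ) • (RCLike.ofReal ∘ d : n → ℂ) := by ext; simp
  rw [unitaryDiag, unitaryDiag, hd, diagonal_smul, map_smul, Complex.coe_smul]

lemma unitaryDiag_sub (U : unitaryGroup n ℂ) (d e : n → ℝ) :
    unitaryDiag U (d - e) = unitaryDiag U d - unitaryDiag U e := by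
  have hde : RCLike.ofReal ∘ (d - e) = fun i => (d i : ℂ) - e i := by ext; simp
  rw [unitaryDiag, unitaryDiag, unitaryDiag, hde, ← diagonal_sub, map_sub]
  rfl

lemma unitaryDiag_sub_const (U : unitaryGroup n ℂ) (d : n → ℝ) (c : ℝ) :
    unitaryDiag U (fun i => d i - c) = unitaryDiag U d - algebraMap ℝ _ c := by
  have hdc : (fun i => d i - c) = d - c • 1 := by ext; simp
  rw [hdc, unitaryDiag_sub, ← smul_unitaryDiag, unitaryDiag_one, Algebra.algebraMap_eq_smul_one]

lemma trace_unitaryDiag (U : unitaryGroup n ℂ) (d : n → ℝ) :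
    (unitaryDiag U d).trace = ((∑ i, d i : ℝ) : ℂ) := by
  simp [unitaryDiag, trace_mul_cycle (U : Matrix n n ℂ), trace_diagonal]

lemma trace_unitaryDiag_mul_unitaryDiag (U V : unitaryGroup n ℂ) (d e : n → ℝ) :
    (unitaryDiag U d * unitaryDiag V e).trace
      = ((∑ j, ∑ m, d j * e m * Complex.normSq ((star (U : Matrix n n ℂ) * V) j m) : ℝ) : ℂ) := by
  set T : Matrix n n ℂ := star (U : Matrix n n ℂ) * V
  set D : Matrix n n ℂ := diagonal (RCLike.ofReal ∘ d)
  set E : Matrix n n ℂ := diagonal (RCLike.ofReal ∘ e)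
  have hcycle : (unitaryDiag U d * unitaryDiag V e).trace = (D * T * E * star T).trace := by
    simp only [unitaryDiag, conjStarAlgAut_apply, T, D, E, star_mul, star_star, Matrix.mul_assoc]
    rw [trace_mul_comm]
    simp only [Matrix.mul_assoc]
  rw [hcycle, trace]
  simp only [diag, mul_apply (M := D * T * E), D, E, mul_diagonal, diagonal_mul, star_apply,
    Complex.ofReal_sum, Complex.ofReal_mul, Complex.normSq_eq_conj_mul_self]
  refine Finset.sum_congr rfl fun j _ => Finset.sum_congr rfl fun m _ => ?_
  simp only [Function.comp_apply, RCLike.ofReal_eq_complex_ofReal, RCLike.star_def]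
  ring

lemma unitaryDiag_eq_unitaryDiag_iff (U V : unitaryGroup n ℂ) (d e : n → ℝ) :
    unitaryDiag U d = unitaryDiag V e ↔
      ∀ j m, (star (U : Matrix n n ℂ) * V) j m ≠ 0 → d j = e m := by
  set T : Matrix n n ℂ := star (U : Matrix n n ℂ) * V
  set D : Matrix n n ℂ := diagonal (RCLike.ofReal ∘ d)
  set E : Matrix n n ℂ := diagonal (RCLike.ofReal ∘ e)
  have hintertwine : unitaryDiag U d = unitaryDiag V e ↔ D * T = T * E := by
    constructor
    · intro h
      calc D * T = star (U : Matrix n n ℂ) * unitaryDiag U d * V := by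
            simp only [unitaryDiag, conjStarAlgAut_apply, T, D, ← mul_assoc,
              star_mul_self_of_mem U.2, one_mul]
        _ = star (U : Matrix n n ℂ) * unitaryDiag V e * V := by rw [h]
        _ = T * E := by
            simp only [unitaryDiag, conjStarAlgAut_apply, T, E, mul_assoc,
              star_mul_self_of_mem V.2, mul_one]
    · intro h
      calc unitaryDiag U d = U * (D * T) * star (V : Matrix n n ℂ) := by
            simp only [unitaryDiag, conjStarAlgAut_apply, T, D, mul_assoc,
              mul_star_self_of_mem V.2, mul_one]
        _ = U * (T * E) * star (V : Matrix n n ℂ) := by rw [h]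
        _ = unitaryDiag V e := by
            simp only [unitaryDiag, conjStarAlgAut_apply, T, E, ← mul_assoc,
              mul_star_self_of_mem U.2, one_mul]
  rw [hintertwine, ← Matrix.ext_iff]
  refine forall_congr' fun j => forall_congr' fun m => ?_
  by_cases hT : T j m = 0
  · simp [D, E, hT]
  · simp [D, E, hT, mul_comm]

lemma cfc_unitaryDiag (f : ℝ → ℝ) (U : unitaryGroup n ℂ) (d : n → ℝ) :
    cfc f (unitaryDiag U d) = unitaryDiag U (f ∘ d) := by
  have hA : (unitaryDiag U d).IsHermitian := isSelfAdjoint_unitaryDiag U d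
  rw [hA.cfc_eq, IsHermitian.cfc]
  change unitaryDiag _ _ = _
  -- `f` preserves the matching of eigenvalues between two diagonalisations of the same matrix.
  have hmatch := (unitaryDiag_eq_unitaryDiag_iff _ _ _ _).mp hA.eq_unitaryDiag.symm
  refine (unitaryDiag_eq_unitaryDiag_iff _ _ _ _).mpr fun j m hjm => ?_
  simp [hmatch j m hjm]

lemma posDef_unitaryDiag {U : unitaryGroup n ℂ} {d : n → ℝ} (hd : ∀ i, 0 < d i) :
    (unitaryDiag U d).PosDef := by
  simp [unitaryDiag, isUnit_coe.posDef_star_right_conjugate_iff, hd]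

lemma unitaryDiag_kronecker (U : unitaryGroup a ℂ) (V : unitaryGroup b ℂ) (d : a → ℝ)
    (e : b → ℝ) :
    unitaryDiag U d ⊗ₖ unitaryDiag V e
      = unitaryDiag ⟨_, kronecker_mem_unitary U.2 V.2⟩ (fun ij => d ij.1 * e ij.2) := by
  simp only [unitaryDiag, conjStarAlgAut_apply, mul_kronecker_mul, diagonal_kronecker_diagonal,
    star_eq_conjTranspose, conjTranspose_kronecker]
  congr 3
  ext ij
  simp

lemma trace_mul_mlog_unitaryDiag (U : unitaryGroup n ℂ) (d : n → ℝ) :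
    (unitaryDiag U d * mlog (unitaryDiag U d)).trace
      = ((∑ i, d i * Real.log (d i) : ℝ) : ℂ) := by
  rw [mlog, cfc_unitaryDiag, unitaryDiag_mul_unitaryDiag, trace_unitaryDiag]
  rfl

lemma trace_kronecker_mul_mlog_kronecker {A : Matrix a a ℂ} {B : Matrix b b ℂ}
    (hA : A.IsHermitian) (hB : B.IsHermitian) :
    ((A ⊗ₖ B) * mlog (A ⊗ₖ B)).trace
      = B.trace * (A * mlog A).trace + A.trace * (B * mlog B).trace := by
  rw [hA.eq_unitaryDiag, hB.eq_unitaryDiag, unitaryDiag_kronecker, trace_mul_mlog_unitaryDiag,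
    trace_mul_mlog_unitaryDiag, trace_mul_mlog_unitaryDiag, trace_unitaryDiag, trace_unitaryDiag]
  have hsplit (x y : ℝ) :
      x * y * Real.log (x * y) = y * (x * Real.log x) + x * (y * Real.log y) := by
    have h := Real.negMulLog_mul x y
    simp only [Real.negMulLog] at h
    linarith
  simp only [hsplit, Fintype.sum_prod_type, Finset.sum_add_distrib, ← Finset.sum_mul,
    ← Finset.mul_sum]
  push_cast
  ring

lemma mul_klFun_div (q : ℝ) {r : ℝ} (hr : 0 < r) :
    r * klFun (q / r) = q * (Real.log q - Real.log r) - (q - r) := by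
  rcases eq_or_ne q 0 with rfl | hq
  · simp [klFun]
  · rw [klFun, Real.log_div hq hr.ne']
    field_simp
    ring

lemma normSq_mul_mul_klFun_div_nonneg (w : ℂ) {q r : ℝ} (hq : 0 ≤ q) (hr : 0 < r) :
    0 ≤ Complex.normSq w * (r * klFun (q / r)) :=
  mul_nonneg (Complex.normSq_nonneg w) (mul_nonneg hr.le (klFun_nonneg (div_nonneg hq hr.le)))

lemma trace_mul_mlog_sub_mlog_unitaryDiag (V W : unitaryGroup n ℂ) (q : n → ℝ) {r : n → ℝ}
    (hr : ∀ m, 0 < r m) :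
    (unitaryDiag V q * (mlog (unitaryDiag V q) - mlog (unitaryDiag W r))).trace.re
      = (unitaryDiag V q - unitaryDiag W r).trace.re
        + ∑ j, ∑ m, Complex.normSq ((star (V : Matrix n n ℂ) * W) j m)
            * (r m * klFun (q j / r m)) := by
  -- Padding with `unitaryDiag _ 1 = 1` puts all four traces over the weights `|(V⋆W) j m|²`.
  have hσ : unitaryDiag V q = unitaryDiag V q * unitaryDiag W 1 := by
    rw [unitaryDiag_one, mul_one]
  have hγ : unitaryDiag W r = unitaryDiag V 1 * unitaryDiag W r := by
    rw [unitaryDiag_one, one_mul]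
  have hσlogσ : unitaryDiag V q * mlog (unitaryDiag V q)
      = unitaryDiag V (fun j => q j * Real.log (q j)) * unitaryDiag W 1 := by
    rw [mlog, cfc_unitaryDiag, unitaryDiag_mul_unitaryDiag, unitaryDiag_one, mul_one]
    rfl
  rw [mul_sub, trace_sub, trace_sub, hσlogσ, mlog, cfc_unitaryDiag]
  nth_rw 2 [hσ]
  rw [hγ]
  simp only [trace_unitaryDiag_mul_unitaryDiag, Complex.sub_re, Complex.ofReal_re,
    ← Finset.sum_sub_distrib, ← Finset.sum_add_distrib]
  refine Finset.sum_congr rfl fun j _ => Finset.sum_congr rfl fun m _ => ?_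
  rw [mul_klFun_div _ (hr m)]
  simp only [Pi.one_apply, Function.comp_apply]
  ring

theorem Matrix.PosSemidef.trace_sub_le_trace_mul_mlog_sub {σ γ : Matrix n n ℂ}
    (hσ : σ.PosSemidef) (hγ : γ.PosDef) :
    (σ - γ).trace.re ≤ (σ * (mlog σ - mlog γ)).trace.re := by
  rw [hσ.1.eq_unitaryDiag, hγ.1.eq_unitaryDiag,
    trace_mul_mlog_sub_mlog_unitaryDiag _ _ _ hγ.eigenvalues_pos, le_add_iff_nonneg_right]
  exact Finset.sum_nonneg fun j _ => Finset.sum_nonneg fun m _ =>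
    normSq_mul_mul_klFun_div_nonneg _ (hσ.eigenvalues_nonneg j) (hγ.eigenvalues_pos m)

theorem Matrix.PosSemidef.eq_of_trace_mul_mlog_sub_eq {σ γ : Matrix n n ℂ}
    (hσ : σ.PosSemidef) (hγ : γ.PosDef)
    (h : (σ * (mlog σ - mlog γ)).trace.re = (σ - γ).trace.re) : σ = γ := by
  rw [hσ.1.eq_unitaryDiag, hγ.1.eq_unitaryDiag] at h ⊢
  rw [trace_mul_mlog_sub_mlog_unitaryDiag _ _ _ hγ.eigenvalues_pos, add_eq_left] at h
  have hq := hσ.eigenvalues_nonneg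
  have hr := hγ.eigenvalues_pos
  have hterm (j m : n) := normSq_mul_mul_klFun_div_nonneg
    ((star (hσ.1.eigenvectorUnitary : Matrix n n ℂ) * hγ.1.eigenvectorUnitary) j m) (hq j) (hr m)
  rw [Finset.sum_eq_zero_iff_of_nonneg fun j _ => Finset.sum_nonneg fun m _ => hterm j m] at h
  refine (unitaryDiag_eq_unitaryDiag_iff _ _ _ _).mpr fun j m hjm => ?_
  have hjm0 := (Finset.sum_eq_zero_iff_of_nonneg fun m _ => hterm j m).mp
    (h j (Finset.mem_univ _)) m (Finset.mem_univ _)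
  rw [mul_eq_zero, Complex.normSq_eq_zero, mul_eq_zero, klFun_eq_zero_iff
    (div_nonneg (hq j) (hr m).le), div_eq_one_iff_eq (hr m).ne'] at hjm0
  exact (hjm0.resolve_left hjm).resolve_left (hr m).ne'

def gibbsState (X : Matrix n n ℂ) : Matrix n n ℂ :=
  (((mexp X).trace.re)⁻¹ : ℝ) • mexp X

section Gibbs

variable {X : Matrix n n ℂ} (hX : X.IsHermitian)
include hX

lemma mexp_eq_unitaryDiag :
    mexp X = unitaryDiag hX.eigenvectorUnitary (Real.exp ∘ hX.eigenvalues) :=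
  hX.cfc_eq _

lemma trace_mexp : (mexp X).trace = ((∑ i, Real.exp (hX.eigenvalues i) : ℝ) : ℂ) := by
  rw [mexp_eq_unitaryDiag hX, trace_unitaryDiag]
  rfl

lemma gibbsState_eq_unitaryDiag : gibbsState X = unitaryDiag hX.eigenvectorUnitary
    (fun i => Real.exp (hX.eigenvalues i) / ∑ j, Real.exp (hX.eigenvalues j)) := by
  rw [gibbsState, trace_mexp hX, Complex.ofReal_re, mexp_eq_unitaryDiag hX, smul_unitaryDiag]
  congr 1
  ext i
  simp [div_eq_inv_mul]

variable [Nonempty n]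

lemma re_trace_mexp_pos : 0 < (mexp X).trace.re := by
  rw [trace_mexp hX, Complex.ofReal_re]
  exact Finset.sum_pos (fun i _ => Real.exp_pos _) Finset.univ_nonempty

lemma gibbsState_posDef : (gibbsState X).PosDef := by
  have hZ := re_trace_mexp_pos hX
  rw [trace_mexp hX, Complex.ofReal_re] at hZ
  rw [gibbsState_eq_unitaryDiag hX]
  exact posDef_unitaryDiag fun i => div_pos (Real.exp_pos _) hZ

lemma trace_gibbsState : (gibbsState X).trace = 1 := by
  have hZ := re_trace_mexp_pos hX
  rw [trace_mexp hX, Complex.ofReal_re] at hZ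
  rw [gibbsState_eq_unitaryDiag hX, trace_unitaryDiag, ← Finset.sum_div, div_self hZ.ne',
    Complex.ofReal_one]

lemma mlog_gibbsState :
    mlog (gibbsState X) = X - algebraMap ℝ _ (Real.log (mexp X).trace.re) := by
  have hZ := re_trace_mexp_pos hX
  rw [trace_mexp hX, Complex.ofReal_re] at hZ ⊢
  rw [gibbsState_eq_unitaryDiag hX, mlog, cfc_unitaryDiag]
  have hlog : Real.log ∘ (fun i => Real.exp (hX.eigenvalues i) / ∑ j, Real.exp (hX.eigenvalues j))
      = fun i => hX.eigenvalues i - Real.log (∑ j, Real.exp (hX.eigenvalues j)) := by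
    ext i
    simp [Real.log_div (Real.exp_pos _).ne' hZ.ne']
  rw [hlog, unitaryDiag_sub_const, ← hX.eq_unitaryDiag]

lemma re_trace_mul_mlog_sub_mlog_gibbsState {σ : Matrix n n ℂ} (hσ : σ.trace = 1) :
    (σ * (mlog σ - mlog (gibbsState X))).trace.re
      = (σ * mlog σ).trace.re - (σ * X).trace.re + Real.log (mexp X).trace.re := by
  rw [mlog_gibbsState hX, Algebra.algebraMap_eq_smul_one, mul_sub, mul_sub, mul_smul_comm, mul_one,
    trace_sub, trace_sub, trace_smul, hσ]
  simp only [Complex.real_smul, mul_one, Complex.sub_re, Complex.ofReal_re]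
  ring

theorem gibbs_variational_le {σ : Matrix n n ℂ} (hσ : IsDensity σ) :
    -Real.log (mexp X).trace.re ≤ (σ * mlog σ).trace.re - (σ * X).trace.re := by
  have hklein := hσ.1.trace_sub_le_trace_mul_mlog_sub (gibbsState_posDef hX)
  rw [re_trace_mul_mlog_sub_mlog_gibbsState hX hσ.2, trace_sub, hσ.2, trace_gibbsState hX,
    sub_self, Complex.zero_re] at hklein
  linarith

theorem gibbs_variational_eq_iff {σ : Matrix n n ℂ} (hσ : IsDensity σ) :
    (σ * mlog σ).trace.re - (σ * X).trace.re = -Real.log (mexp X).trace.re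
      ↔ σ = gibbsState X := by
  have hgap := re_trace_mul_mlog_sub_mlog_gibbsState hX hσ.2
  constructor
  · intro h
    refine hσ.1.eq_of_trace_mul_mlog_sub_eq (gibbsState_posDef hX) ?_
    rw [hgap, trace_sub, hσ.2, trace_gibbsState hX, sub_self, Complex.zero_re]
    linarith
  · rintro rfl
    rw [sub_self, mul_zero, trace_zero, Complex.zero_re] at hgap
    linarith

end Gibbs

omit [Fintype a] [DecidableEq a] [DecidableEq b] in
lemma ptraceB_eq_sum_submatrix (ρ : Matrix (a × b) (a × b) ℂ) :
    ptraceB ρ = ∑ k, ρ.submatrix (·, k) (·, k) := by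
  ext i j
  simp [ptraceB, Matrix.sum_apply]

omit [DecidableEq a] [DecidableEq b] in
lemma ptraceB_trace (ρ : Matrix (a × b) (a × b) ℂ) : (ptraceB ρ).trace = ρ.trace := by
  simp [trace, ptraceB, Fintype.sum_prod_type]

omit [Fintype a] [DecidableEq a] [DecidableEq b] in
lemma Matrix.PosDef.ptraceB [Nonempty b] {ρ : Matrix (a × b) (a × b) ℂ} (hρ : ρ.PosDef) :
    (ptraceB ρ).PosDef := by
  rw [ptraceB_eq_sum_submatrix]
  exact posDef_sum Finset.univ_nonempty fun k _ =>
    hρ.submatrix fun i j h => (Prod.ext_iff.mp h).1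

omit [DecidableEq a] [Fintype b] [DecidableEq b] in
lemma ptraceA_conjTranspose (M : Matrix (a × b) (a × b) ℂ) : ptraceA Mᴴ = (ptraceA M)ᴴ := by
  ext k l
  simp [ptraceA]

omit [DecidableEq a] in
lemma ptraceA_kronecker_one_mul_comm (A : Matrix a a ℂ) (M : Matrix (a × b) (a × b) ℂ) :
    ptraceA ((A ⊗ₖ 1) * M) = ptraceA (M * (A ⊗ₖ 1)) := by
  ext k l
  simp only [ptraceA, mul_apply, kroneckerMap_apply, one_apply, mul_ite, mul_one, mul_zero,
    ite_mul, zero_mul, Fintype.sum_prod_type, Finset.sum_ite_eq, Finset.mem_univ, ↓reduceIte,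
    of_apply, Finset.sum_ite_eq']
  rw [Finset.sum_comm]
  exact Finset.sum_congr rfl fun _ _ => Finset.sum_congr rfl fun _ _ => mul_comm _ _

omit [DecidableEq b] in
lemma trace_one_kronecker_mul (σ : Matrix b b ℂ) (M : Matrix (a × b) (a × b) ℂ) :
    (((1 : Matrix a a ℂ) ⊗ₖ σ) * M).trace = (σ * ptraceA M).trace := by
  simp only [trace, diag_apply, mul_apply, kroneckerMap_apply, one_apply, ite_mul, one_mul,
    zero_mul, Fintype.sum_prod_type, Finset.sum_ite_irrel, Finset.sum_const_zero,
    Finset.sum_ite_eq, Finset.mem_univ, ↓reduceIte, ptraceA, of_apply, Finset.mul_sum]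
  rw [Finset.sum_comm]
  exact Finset.sum_congr rfl fun _ _ => Finset.sum_comm

lemma trace_kronecker_mul (A : Matrix a a ℂ) (σ : Matrix b b ℂ) (M : Matrix (a × b) (a × b) ℂ) :
    ((A ⊗ₖ σ) * M).trace = (σ * ptraceA ((A ⊗ₖ 1) * M)).trace := by
  rw [← trace_one_kronecker_mul, ← Matrix.mul_assoc, ← mul_kronecker_mul, Matrix.one_mul,
    Matrix.mul_one]

lemma Xop_isHermitian {ρ : Matrix (a × b) (a × b) ℂ} (hρA : (ptraceB ρ).IsHermitian) :
    (Xop ρ).IsHermitian := by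
  have hlog : (mlog ρ).IsHermitian := cfc_predicate Real.log ρ
  rw [IsHermitian, Xop, ← ptraceA_conjTranspose, conjTranspose_mul, conjTranspose_kronecker,
    hlog.eq, hρA.eq, conjTranspose_one, ptraceA_kronecker_one_mul_comm]

lemma umlautMarginal_eq_gibbsState (ρ : Matrix (a × b) (a × b) ℂ) :
    umlautMarginal ρ = gibbsState (Xop ρ) :=
  rfl

lemma relEntropy_of_posDef {ρ : Matrix n n ℂ} (hρ : ρ.PosDef) (M : Matrix n n ℂ) :
    relEntropy M ρ = (((M * (mlog M - mlog ρ)).trace.re : ℝ) : EReal) := by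
  rw [relEntropy, if_pos]
  intro v hv
  rw [mulVec_injective_iff_isUnit.mpr hρ.isUnit (hv.trans (mulVec_zero ρ).symm), mulVec_zero]

lemma relEntropy_ptraceB_kronecker [Nonempty b] {ρ : Matrix (a × b) (a × b) ℂ} (hρ : ρ.PosDef)
    (htr : ρ.trace = 1) {σ : Matrix b b ℂ} (hσ : IsDensity σ) :
    relEntropy (ptraceB ρ ⊗ₖ σ) ρ = (((ptraceB ρ * mlog (ptraceB ρ)).trace.re
      + ((σ * mlog σ).trace.re - (σ * Xop ρ).trace.re) : ℝ) : EReal) := by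
  rw [relEntropy_of_posDef hρ, EReal.coe_eq_coe_iff, mul_sub, trace_sub,
    trace_kronecker_mul_mlog_kronecker hρ.ptraceB.1 hσ.1.1, trace_kronecker_mul, ← Xop, hσ.2,
    ptraceB_trace, htr]
  simp only [one_mul, Complex.sub_re, Complex.add_re]
  ring

/-- closed form for the quantum umlaut information and uniqueness of the
minimiser (the umlaut-marginal), for a full-support state. -/
theorem umlaut_closed_form (ρ : Matrix (a × b) (a × b) ℂ) (hρ : ρ.PosDef)
    (htr : ρ.trace = 1) :
    umlaut ρ = ((((ptraceB ρ * mlog (ptraceB ρ)).trace.re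
        - Real.log ((mexp (Xop ρ)).trace.re) : ℝ)) : EReal) ∧
    ∀ σ : Matrix b b ℂ, IsDensity σ →
      (relEntropy (ptraceB ρ ⊗ₖ σ) ρ = umlaut ρ ↔ σ = umlautMarginal ρ) := by
  have : Nonempty b := by
    by_contra hb
    rw [not_nonempty_iff] at hb
    simp [trace] at htr
  have hX := Xop_isHermitian hρ.ptraceB.1
  have hγ : IsDensity (gibbsState (Xop ρ)) :=
    ⟨(gibbsState_posDef hX).posSemidef, trace_gibbsState hX⟩
  have hmin : umlaut ρ = ((((ptraceB ρ * mlog (ptraceB ρ)).trace.re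
      - Real.log ((mexp (Xop ρ)).trace.re) : ℝ)) : EReal) := by
    refine le_antisymm (iInf_le_of_le ⟨_, hγ⟩ ?_) (le_iInf fun σ => ?_)
    · rw [relEntropy_ptraceB_kronecker hρ htr hγ, (gibbs_variational_eq_iff hX hγ).mpr rfl,
        sub_eq_add_neg]
    · rw [relEntropy_ptraceB_kronecker hρ htr σ.2, EReal.coe_le_coe_iff]
      linarith [gibbs_variational_le hX σ.2]
  refine ⟨hmin, fun σ hσ => ?_⟩
  rw [relEntropy_ptraceB_kronecker hρ htr hσ, hmin, EReal.coe_eq_coe_iff,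
    umlautMarginal_eq_gibbsState, ← gibbs_variational_eq_iff hX hσ]
  constructor <;> intro h <;> linarith
end
end

section
/- Lower bound on the classical-quantum umlaut information by k-point lower umlaut information: for any k ≥ 1 and any q ∈ ℝ^k with Σᵢ qᵢ = 1, and for any probability distribution P_X, the umlaut information of the CQ state ρ_{X'B} = Σ_x P_X(x)|x⟩⟨x| ⊗ ρ_x satisfies U(X';B)_ρ ≥ Σ_{x1,...,xk} P_X(x1)···P_X(xk) (−log Tr[exp(Σᵢ qᵢ log ρ_{xᵢ})]). -/
open scoped Kronecker ComplexOrder Classical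
open Matrix

noncomputable section

variable {n a b : Type*} [Fintype n] [DecidableEq n]
  [Fintype a] [DecidableEq a] [Fintype b] [DecidableEq b]

/-- The classical-quantum state `Σ_x P(x) |x⟩⟨x| ⊗ ρ_x`. -/
def cqState {X : Type*} [Fintype X] [DecidableEq X] (P : X → ℝ) (ρ : X → Matrix b b ℂ) :
    Matrix (X × b) (X × b) ℂ :=
  ∑ x : X, ((P x : ℝ) : ℂ) • (Matrix.single x x 1 ⊗ₖ ρ x)

/-- The umlaut information of a classical-quantum channel `x ↦ ρ_x`. -/
def cqUmlaut {X : Type*} [Fintype X] [DecidableEq X] (ρ : X → Matrix b b ℂ) : EReal :=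
  ⨆ P : {P : X → ℝ // (∀ x, 0 ≤ P x) ∧ ∑ x, P x = 1}, umlaut (cqState P.1 ρ)

/-!
Fix a state `σ`. On the block of `x`, both `P ⊗ σ` and the cq-state are multiples `P x • σ` and
`P x • ρ x`, so the relative entropy splits as `∑ x, P x * Tr[σ (log σ - log ρ x)]`. The Gibbs
variational principle `-log Tr exp H ≤ Tr[σ log σ] - Tr[σ H]` for `H = ∑ i, q i • log ρ (xs i)`
bounds the `xs`-term by `∑ i, q i * Tr[σ (log σ - log ρ (xs i))]` since `∑ i, q i = 1`, and
averaging over `xs` drawn i.i.d. from `P` turns this into the relative entropy again.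

The variational principle is proved in an eigenbasis `uᵢ` of `σ`: it reduces to the classical
one, `-log ∑ i, exp cᵢ ≤ ∑ i, sᵢ (log sᵢ - cᵢ)` with `cᵢ = ⟨uᵢ, H uᵢ⟩`, together with Peierls'
inequality `∑ i, exp ⟨uᵢ, H uᵢ⟩ ≤ Tr exp H`, which is Jensen's inequality for the spectral
distribution of `H` in each `uᵢ`.
-/

open scoped MatrixOrder

theorem neg_log_sum_exp_le {ι : Type*} [Fintype ι] (s c : ι → ℝ) (hs0 : ∀ i, 0 ≤ s i)
    (hs1 : ∑ i, s i = 1) :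
    -Real.log (∑ i, Real.exp (c i)) ≤ ∑ i, s i * (Real.log (s i) - c i) := by
  set Z := ∑ i, Real.exp (c i) with hZdef
  have hZ : 0 < Z := Finset.sum_pos (fun i _ => Real.exp_pos _)
    (Finset.nonempty_of_sum_ne_zero (hs1 ▸ one_ne_zero))
  -- `x - 1 ≤ x log x` at `x = s i / t` with `t = exp (c i) / Z`, rescaled by `t`
  have key : ∀ i, s i - Real.exp (c i) / Z ≤ s i * (Real.log (s i) - c i + Real.log Z) := by
    intro i
    have ht : 0 < Real.exp (c i) / Z := by positivity
    have h := mul_le_mul_of_nonneg_left (Real.self_sub_one_le_mul_log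
      (div_nonneg (hs0 i) ht.le)) ht.le
    rcases (hs0 i).eq_or_lt with hsi | hsi
    · simp [← hsi, ht.le]
    rw [mul_sub, mul_one, mul_div_cancel₀ _ ht.ne', ← mul_assoc, mul_div_cancel₀ _ ht.ne',
      Real.log_div hsi.ne' ht.ne', Real.log_div (Real.exp_pos _).ne' hZ.ne', Real.log_exp] at h
    linarith [show s i * (Real.log (s i) - (c i - Real.log Z))
      = s i * (Real.log (s i) - c i + Real.log Z) by ring]
  have hsum := Finset.sum_le_sum fun i (_ : i ∈ Finset.univ) => key i
  rw [Finset.sum_sub_distrib, ← Finset.sum_div, ← hZdef, div_self hZ.ne', hs1] at hsum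
  simp only [mul_add, Finset.sum_add_distrib, ← Finset.sum_mul, hs1, one_mul] at hsum
  linarith

section SpectralInequalities

variable {d : Type*} [Fintype d] [DecidableEq d]

theorem Matrix.IsHermitian.star_mul_cfc_mul_apply_self {H : Matrix d d ℂ} (hH : H.IsHermitian)
    (U : Matrix d d ℂ) (g : ℝ → ℝ) (i : d) :
    (star U * cfc g H * U) i i = ∑ j, ((Complex.normSq
      ((star (hH.eigenvectorUnitary : Matrix d d ℂ) * U) j i) * g (hH.eigenvalues j) : ℝ) : ℂ) := by
  set W := star (hH.eigenvectorUnitary : Matrix d d ℂ) * U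
  have hW : star U * cfc g H * U = star W * diagonal (RCLike.ofReal ∘ g ∘ hH.eigenvalues) * W := by
    rw [hH.cfc_eq, IsHermitian.cfc, Unitary.conjStarAlgAut_apply]
    simp [W, StarMul.star_mul, mul_assoc]
  rw [hW, mul_apply]
  refine Finset.sum_congr rfl fun j _ => ?_
  rw [mul_diagonal, star_apply, Complex.ofReal_mul, Complex.normSq_eq_conj_mul_self]
  exact mul_right_comm (star (W j i)) _ _

theorem sum_normSq_apply_eq_one {W : Matrix d d ℂ} (hW : W ∈ unitaryGroup d ℂ) (i : d) :
    ∑ j, Complex.normSq (W j i) = 1 := by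
  have h := congrArg (fun M : Matrix d d ℂ => (M i i).re) (Unitary.star_mul_self_of_mem hW)
  simpa [mul_apply, Complex.normSq_apply] using h

theorem ConvexOn.map_star_mul_mul_apply_self_le {f : ℝ → ℝ} (hf : ConvexOn ℝ Set.univ f)
    {H : Matrix d d ℂ} (hH : H.IsHermitian) {U : Matrix d d ℂ} (hU : U ∈ unitaryGroup d ℂ)
    (i : d) : f ((star U * H * U) i i).re ≤ ((star U * cfc f H * U) i i).re := by
  set W := star (hH.eigenvectorUnitary : Matrix d d ℂ) * U
  have hW : W ∈ unitaryGroup d ℂ :=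
    Submonoid.mul_mem _ (Unitary.star_mem hH.eigenvectorUnitary.2) hU
  conv_lhs => rw [← cfc_id' ℝ H]
  simp only [hH.star_mul_cfc_mul_apply_self, Complex.re_sum, Complex.ofReal_re]
  exact hf.map_sum_le (fun j _ => Complex.normSq_nonneg _) (sum_normSq_apply_eq_one hW i)
    (fun j _ => Set.mem_univ _)

theorem Matrix.IsHermitian.star_eigenvectorUnitary_mul_cfc_mul_apply_self {A : Matrix d d ℂ}
    (hA : A.IsHermitian) (g : ℝ → ℝ) (i : d) :
    (star (hA.eigenvectorUnitary : Matrix d d ℂ) * cfc g A * hA.eigenvectorUnitary) i i =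
      g (hA.eigenvalues i) := by
  rw [hA.star_mul_cfc_mul_apply_self, Unitary.coe_star_mul_self]
  simp [one_apply, apply_ite]

theorem trace_eq_sum_star_mul_mul_apply_self {R : Type*} [CommRing R] [StarRing R]
    (M : Matrix d d R) {U : Matrix d d R} (hU : U ∈ unitaryGroup d R) :
    M.trace = ∑ i, (star U * M * U) i i := by
  calc M.trace = (star U * M * U).trace := by
        rw [mul_assoc, trace_mul_comm, mul_assoc, Unitary.mul_star_self_of_mem hU, mul_one]
    _ = _ := rfl

theorem Matrix.IsHermitian.trace_mul_eq_sum {A : Matrix d d ℂ} (hA : A.IsHermitian)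
    (M : Matrix d d ℂ) : (A * M).trace = ∑ i, (hA.eigenvalues i : ℂ) *
      (star (hA.eigenvectorUnitary : Matrix d d ℂ) * M * hA.eigenvectorUnitary) i i := by
  conv_lhs => rw [hA.spectral_theorem, Unitary.conjStarAlgAut_apply]
  rw [mul_assoc, mul_assoc, trace_mul_comm, mul_assoc]
  simp [trace, diagonal_mul, mul_assoc]

theorem neg_log_trace_mexp_le {σ H : Matrix d d ℂ} (hσ : σ.PosSemidef) (hσ1 : σ.trace = 1)
    (hH : H.IsHermitian) :
    -Real.log (mexp H).trace.re ≤ (σ * mlog σ).trace.re - (σ * H).trace.re := by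
  have hσh : σ.IsHermitian := hσ.1
  set c := fun i => ((star (hσh.eigenvectorUnitary : Matrix d d ℂ) * H *
    hσh.eigenvectorUnitary) i i).re
  have hs1 : ∑ i, hσh.eigenvalues i = 1 := by
    simpa [hσ1] using congrArg Complex.re hσh.trace_eq_sum_eigenvalues.symm
  have hPeierls : ∑ i, Real.exp (c i) ≤ (mexp H).trace.re := by
    rw [trace_eq_sum_star_mul_mul_apply_self _ hσh.eigenvectorUnitary.2, Complex.re_sum]
    exact Finset.sum_le_sum fun i _ =>
      convexOn_exp.map_star_mul_mul_apply_self_le hH hσh.eigenvectorUnitary.2 i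
  have hpos : 0 < ∑ i, Real.exp (c i) := Finset.sum_pos (fun i _ => Real.exp_pos _)
    (Finset.nonempty_of_sum_ne_zero (hs1 ▸ one_ne_zero))
  calc -Real.log (mexp H).trace.re ≤ -Real.log (∑ i, Real.exp (c i)) :=
        neg_le_neg (Real.log_le_log hpos hPeierls)
    _ ≤ ∑ i, hσh.eigenvalues i * (Real.log (hσh.eigenvalues i) - c i) :=
        neg_log_sum_exp_le _ c hσ.eigenvalues_nonneg hs1
    _ = (σ * mlog σ).trace.re - (σ * H).trace.re := by
        rw [hσh.trace_mul_eq_sum, hσh.trace_mul_eq_sum, mlog]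
        simp only [hσh.star_eigenvectorUnitary_mul_cfc_mul_apply_self]
        simp [Complex.re_sum, mul_sub, c]

theorem neg_log_trace_mexp_sum_smul_mlog_le {ι : Type*} [Fintype ι] {q : ι → ℝ}
    (hq : ∑ i, q i = 1) (ρ : ι → Matrix d d ℂ) {σ : Matrix d d ℂ} (hσ : σ.PosSemidef)
    (hσ1 : σ.trace = 1) :
    -Real.log (mexp (∑ i, q i • mlog (ρ i))).trace.re ≤
      ∑ i, q i * (σ * (mlog σ - mlog (ρ i))).trace.re := by
  have hH : (∑ i, q i • mlog (ρ i)).IsHermitian := (isSelfAdjoint_sum _ fun i _ =>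
    (IsSelfAdjoint.all (q i)).smul (cfc_predicate Real.log (ρ i))).isHermitian
  refine (neg_log_trace_mexp_le hσ hσ1 hH).trans_eq ?_
  simp only [mul_sub, Finset.mul_sum, mul_smul_comm, trace_sub, trace_sum, trace_smul,
    Complex.sub_re, Complex.re_sum, Complex.real_smul, Complex.re_ofReal_mul,
    Finset.sum_sub_distrib, ← Finset.sum_mul, hq, one_mul]

end SpectralInequalities

section LogOfMultiple

variable {d : Type*} [Fintype d] [DecidableEq d]

theorem mlog_smul {A : Matrix d d ℂ} (hA : A.PosDef) {c : ℝ} (hc : c ≠ 0) :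
    mlog (c • A) = Real.log c • 1 + mlog A := by
  have hfin := A.finite_real_spectrum
  calc mlog (c • A) = cfc (fun t => Real.log (c * t)) A :=
        (cfc_comp_const_mul c Real.log A (hfin.image _ |>.continuousOn _)
          hA.1.isSelfAdjoint).symm
    _ = cfc (fun t => Real.log c + Real.log t) A :=
        cfc_congr fun t ht => Real.log_mul hc (hA.isStrictlyPositive.spectrum_pos ht).ne'
    _ = Real.log c • 1 + mlog A := by
        rw [cfc_const_add _ _ A (hfin.continuousOn _) hA.1.isSelfAdjoint,
          Algebra.algebraMap_eq_smul_one, mlog]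

-- `mlog_smul` fails on `ker A` for singular `A` (as `Real.log 0 = 0`); the factor `A` kills it.
theorem mul_mlog_smul {A : Matrix d d ℂ} (hA : A.IsHermitian) {c : ℝ} (hc : c ≠ 0) :
    A * mlog (c • A) = A * (Real.log c • 1 + mlog A) := by
  have hfin := A.finite_real_spectrum
  calc A * mlog (c • A) = cfc (fun t => t * Real.log (c * t)) A := by
        rw [cfc_mul _ _ A (hfin.continuousOn _) (hfin.continuousOn _),
          cfc_id' ℝ A hA.isSelfAdjoint, cfc_comp_const_mul c Real.log A
            (hfin.image _ |>.continuousOn _) hA.isSelfAdjoint, mlog]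
    _ = cfc (fun t => t * (Real.log c + Real.log t)) A := by
        refine cfc_congr fun t _ => ?_
        rcases eq_or_ne t 0 with rfl | ht
        · simp
        · rw [Real.log_mul hc ht]
    _ = A * (Real.log c • 1 + mlog A) := by
        rw [cfc_mul _ _ A (hfin.continuousOn _) (hfin.continuousOn _),
          cfc_id' ℝ A hA.isSelfAdjoint, cfc_const_add _ _ A (hfin.continuousOn _)
            hA.isSelfAdjoint, Algebra.algebraMap_eq_smul_one, mlog]

theorem smul_mul_mlog_smul_sub_mlog_smul {σ ρ : Matrix d d ℂ} (hσ : σ.IsHermitian)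
    (hρ : ρ.PosDef) (c : ℝ) :
    (c • σ) * (mlog (c • σ) - mlog (c • ρ)) = c • (σ * (mlog σ - mlog ρ)) := by
  rcases eq_or_ne c 0 with rfl | hc
  · simp
  rw [smul_mul_assoc, mul_sub, mul_mlog_smul hσ hc, mlog_smul hρ hc, ← mul_sub,
    add_sub_add_left_eq_sub]

end LogOfMultiple

theorem cfc_eq_aeval_interpolate {A : Type*} [Ring A] [StarRing A] [TopologicalSpace A]
    [Algebra ℝ A] [ContinuousFunctionalCalculus ℝ A IsSelfAdjoint] {a : A}
    (ha : IsSelfAdjoint a) (f : ℝ → ℝ) {T : Finset ℝ} (hT : spectrum ℝ a ⊆ T) :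
    cfc f a = Polynomial.aeval a (Lagrange.interpolate T id f) := by
  rw [← cfc_polynomial _ a ha]
  exact cfc_congr fun t ht => (Lagrange.eval_interpolate_at_node f (Set.injOn_id _) (hT ht)).symm

theorem AlgHom.map_cfc_pi {X m d : Type*} [Fintype X] [Fintype m] [DecidableEq m] [Fintype d]
    [DecidableEq d] (φ : (X → Matrix d d ℂ) →ₐ[ℝ] Matrix m m ℂ) (f : ℝ → ℝ)
    {A : X → Matrix d d ℂ} (hA : ∀ x, (A x).IsHermitian) (hφA : (φ A).IsHermitian) :
    φ (fun x => cfc f (A x)) = cfc f (φ A) := by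
  set T := ((φ A).finite_real_spectrum.union
    (Set.finite_iUnion fun x => (A x).finite_real_spectrum)).toFinset
  have hT : spectrum ℝ (φ A) ∪ ⋃ x, spectrum ℝ (A x) ⊆ T := by simp [T]
  rw [cfc_eq_aeval_interpolate hφA f (Set.subset_union_left.trans hT),
    Polynomial.aeval_algHom_apply, Polynomial.aeval_pi_apply]
  congr! with x
  exact cfc_eq_aeval_interpolate (hA x) f
    ((Set.subset_iUnion _ x).trans (Set.subset_union_right.trans hT))

section BlockDiagonal

variable {X d : Type*} [Fintype X] [DecidableEq X] [Fintype d] [DecidableEq d]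

/-- `∑ x, |x⟩⟨x| ⊗ A x`; Mathlib's `blockDiagonal` puts the block index second. -/
def blockDiagonalFst : (X → Matrix d d ℂ) →ₐ[ℝ] Matrix (X × d) (X × d) ℂ :=
  (reindexAlgEquiv ℝ ℂ (Equiv.prodComm d X)).toAlgHom.comp
    { blockDiagonalRingHom d X ℂ with
      commutes' := fun r => by simp [Algebra.algebraMap_eq_smul_one, blockDiagonal_smul] }

@[simp]
theorem blockDiagonalFst_apply (A : X → Matrix d d ℂ) (x y : X) (i j : d) :
    blockDiagonalFst A (x, i) (y, j) = if x = y then A x i j else 0 := by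
  simp [blockDiagonalFst, blockDiagonal_apply]

theorem trace_blockDiagonalFst (A : X → Matrix d d ℂ) :
    (blockDiagonalFst A).trace = ∑ x, (A x).trace := by
  simp [trace, Fintype.sum_prod_type]

theorem isHermitian_blockDiagonalFst {A : X → Matrix d d ℂ} (hA : ∀ x, (A x).IsHermitian) :
    (blockDiagonalFst A).IsHermitian :=
  (isHermitian_blockDiagonal_iff.mpr hA).reindex (Equiv.prodComm d X)

theorem mlog_blockDiagonalFst {A : X → Matrix d d ℂ} (hA : ∀ x, (A x).IsHermitian) :
    mlog (blockDiagonalFst A) = blockDiagonalFst fun x => mlog (A x) :=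
  (blockDiagonalFst.map_cfc_pi Real.log hA (isHermitian_blockDiagonalFst hA)).symm

theorem diagonal_kronecker_eq_blockDiagonalFst (P : X → ℝ) (σ : Matrix d d ℂ) :
    (diagonal fun x => (P x : ℂ)) ⊗ₖ σ = blockDiagonalFst fun x => P x • σ := by
  ext ⟨x, i⟩ ⟨y, j⟩
  simp [diagonal_apply]

theorem cqState_eq_blockDiagonalFst (P : X → ℝ) (ρ : X → Matrix d d ℂ) :
    cqState P ρ = blockDiagonalFst fun x => P x • ρ x := by
  ext ⟨x, i⟩ ⟨y, j⟩
  rcases eq_or_ne x y with rfl | hxy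
  · simp [cqState, Matrix.sum_apply, single_apply]
  · simp only [cqState, Matrix.sum_apply, Matrix.smul_apply, kroneckerMap_apply, single_apply,
      ite_mul, one_mul, zero_mul, smul_ite, smul_zero, blockDiagonalFst_apply, hxy, if_false]
    exact Finset.sum_eq_zero fun z _ => if_neg fun h : z = x ∧ z = y => hxy (h.1.symm.trans h.2)

end BlockDiagonal

section CQState

variable {X d : Type*} [Fintype X] [DecidableEq X] [Fintype d] [DecidableEq d]

theorem ptraceB_cqState {P : X → ℝ} {ρ : X → Matrix d d ℂ} (hρ1 : ∀ x, (ρ x).trace = 1) :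
    ptraceB (cqState P ρ) = diagonal fun x => (P x : ℂ) := by
  ext x y
  rcases eq_or_ne x y with rfl | hxy
  · simp [cqState_eq_blockDiagonalFst, ptraceB, ← Finset.mul_sum,
      show ∑ i, ρ x i i = 1 from hρ1 x]
  · simp [cqState_eq_blockDiagonalFst, ptraceB, hxy]

theorem re_trace_relEntropy_cqState {P : X → ℝ} {ρ : X → Matrix d d ℂ}
    (hρ : ∀ x, (ρ x).PosDef) (hρ1 : ∀ x, (ρ x).trace = 1) {σ : Matrix d d ℂ}
    (hσ : σ.IsHermitian) :
    ((ptraceB (cqState P ρ) ⊗ₖ σ) *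
      (mlog (ptraceB (cqState P ρ) ⊗ₖ σ) - mlog (cqState P ρ))).trace.re =
      ∑ x, P x * (σ * (mlog σ - mlog (ρ x))).trace.re := by
  have hPσ : ∀ x, (P x • σ).IsHermitian := fun x => hσ.smul (.all (P x))
  have hPρ : ∀ x, (P x • ρ x).IsHermitian := fun x => (hρ x).1.smul (.all (P x))
  rw [ptraceB_cqState hρ1, diagonal_kronecker_eq_blockDiagonalFst,
    cqState_eq_blockDiagonalFst, mlog_blockDiagonalFst hPσ, mlog_blockDiagonalFst hPρ,
    ← map_sub, ← map_mul, trace_blockDiagonalFst, Complex.re_sum]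
  refine Finset.sum_congr rfl fun x _ => ?_
  rw [Pi.mul_apply, Pi.sub_apply, smul_mul_mlog_smul_sub_mlog_smul hσ (hρ x), trace_smul,
    Complex.real_smul, Complex.re_ofReal_mul]

end CQState

section Averaging

variable {ι X : Type*} [Fintype ι] [DecidableEq ι] [Fintype X] {P : X → ℝ}

theorem sum_prod_mul_apply (hP : ∑ x, P x = 1) (f : X → ℝ) (i : ι) :
    ∑ xs : ι → X, (∏ j, P (xs j)) * f (xs i) = ∑ x, P x * f x := by
  set g : ι → X → ℝ := fun j x => P x * if j = i then f x else 1
  calc ∑ xs : ι → X, (∏ j, P (xs j)) * f (xs i) = ∑ xs : ι → X, ∏ j, g j (xs j) := by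
        refine Finset.sum_congr rfl fun xs _ => ?_
        rw [Finset.prod_mul_distrib, Fintype.prod_ite_eq']
    _ = ∏ j, ∑ x, g j x := (Fintype.prod_sum g).symm
    _ = ∑ x, P x * f x := by simp [g, apply_ite, hP]

theorem sum_prod_mul_sum_mul_apply (hP : ∑ x, P x = 1) {q : ι → ℝ} (hq : ∑ i, q i = 1)
    (f : X → ℝ) :
    ∑ xs : ι → X, (∏ j, P (xs j)) * ∑ i, q i * f (xs i) = ∑ x, P x * f x := by
  simp_rw [Finset.mul_sum, mul_left_comm _ (q _)]
  rw [Finset.sum_comm]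
  simp_rw [← Finset.mul_sum, sum_prod_mul_apply hP, ← Finset.sum_mul, hq, one_mul]

end Averaging

theorem cq_lower_umlaut_bound_general {X : Type*} [Fintype X] [DecidableEq X]
    (k : ℕ) (q : Fin k → ℝ) (hq : ∑ i, q i = 1)
    (ρ : X → Matrix b b ℂ) (hρ : ∀ x, (ρ x).PosDef ∧ (ρ x).trace = 1)
    (P : X → ℝ) (hP0 : ∀ x, 0 ≤ P x) (hP1 : ∑ x, P x = 1) :
    ((∑ xs : Fin k → X, (∏ i, P (xs i)) *
        (-Real.log ((mexp (∑ i, q i • mlog (ρ (xs i)))).trace.re)) : ℝ) : EReal)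
      ≤ umlaut (cqState P ρ) := by
  refine le_iInf fun ⟨σ, hσ, hσ1⟩ => ?_
  rw [relEntropy]
  split_ifs
  · rw [EReal.coe_le_coe_iff, re_trace_relEntropy_cqState (fun x => (hρ x).1)
      (fun x => (hρ x).2) hσ.1]
    calc _ ≤ ∑ xs : Fin k → X, (∏ i, P (xs i)) *
          ∑ i, q i * (σ * (mlog σ - mlog (ρ (xs i)))).trace.re :=
          Finset.sum_le_sum fun xs _ => mul_le_mul_of_nonneg_left
            (neg_log_trace_mexp_sum_smul_mlog_le hq _ hσ hσ1)
            (Finset.prod_nonneg fun i _ => hP0 (xs i))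
      _ = _ := sum_prod_mul_sum_mul_apply hP1 hq fun x => (σ * (mlog σ - mlog (ρ x))).trace.re
  · exact le_top

/-- the k-point lower umlaut information lower bounds the umlaut information
of a classical-quantum state. -/
theorem cq_lower_umlaut_bound {X : Type*} [Fintype X] [DecidableEq X]
    (k : ℕ) (hk : 1 ≤ k) (q : Fin k → ℝ) (hq : ∑ i, q i = 1)
    (ρ : X → Matrix b b ℂ) (hρ : ∀ x, (ρ x).PosDef ∧ (ρ x).trace = 1)
    (P : X → ℝ) (hP0 : ∀ x, 0 ≤ P x) (hP1 : ∑ x, P x = 1) :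
    ((∑ xs : Fin k → X, (∏ i, P (xs i)) *
        (-Real.log ((mexp (∑ i, q i • mlog (ρ (xs i)))).trace.re)) : ℝ) : EReal)
      ≤ umlaut (cqState P ρ) :=
  cq_lower_umlaut_bound_general k q hq ρ hρ P hP0 hP1

end
end
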